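/- Let A ∈ ℝ^{m×n}, E ⊆ [n] a greedily eliminated column set, Δ = [n] \ E, A^r the submatrix on columns Δ, b^r ∈ ℝ^m with R(A^r,b^r) nonempty, and b = b^r + b^e with b^e_i = Σ_{k∈E} a_{ik} d(1-x^e_k), where x^e_k = 1 if column k was eliminated by the positive rule and 0 otherwise. Then for every z ∈ D^Δ with A^r z ≱ b^r (i.e., z infeasible for (A^r,b^r)) and every ζ ∈ D^E, the combined vector (z,ζ) is infeasible for (A,b). -/

import Mathlib

open Finset

/-- A matrix can be eliminated at column `j` if either every row with a positive
entry in column `j` vanishes outside column `j`, or every row with a negative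
entry in column `j` vanishes outside column `j`. -/
def CanElim {m : ℕ} {ι : Type} (A : Matrix (Fin m) ι ℝ) (j : ι) : Prop :=
  (∀ i, 0 < A i j → ∀ j', j' ≠ j → A i j' = 0) ∨
  (∀ i, A i j < 0 → ∀ j', j' ≠ j → A i j' = 0)

/-- The matrix obtained from `A` by zeroing out the columns in `J`. -/
def elimCols {m n : ℕ} (A : Matrix (Fin m) (Fin n) ℝ) (J : Finset (Fin n)) :
    Matrix (Fin m) (Fin n) ℝ :=
  fun i j => if j ∈ J then 0 else A i j

/-- `A` has an elimination ordering: an enumeration `σ 0, σ 1, …` of the columns such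
that at each step, the matrix with the previously processed columns zeroed out can be
eliminated at the next column. -/
def HasEO {m n : ℕ} (A : Matrix (Fin m) (Fin n) ℝ) : Prop :=
  ∃ σ : Equiv.Perm (Fin n), ∀ t : Fin n,
    CanElim (elimCols A ((Finset.univ.filter (fun t' => t' < t)).image σ)) (σ t)

/-- `x` has all coordinates in `D = {0,…,d}`. -/
def InD (d : ℕ) {ι : Type} (x : ι → ℤ) : Prop := ∀ j, 0 ≤ x j ∧ x j ≤ (d : ℤ)

/-- `x ∈ D^ι` is a feasible solution of the integer linear system `(A, b)`. -/
def Feas (d : ℕ) {m : ℕ} {ι : Type} [Fintype ι] (A : Matrix (Fin m) ι ℝ)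
    (b : Fin m → ℝ) (x : ι → ℤ) : Prop :=
  InD d x ∧ ∀ i, b i ≤ ∑ j, A i j * (x j : ℝ)

/-- Adjacency in the solution graph: both endpoints feasible and Hamming distance 1. -/
def SolStep (d : ℕ) {m : ℕ} {ι : Type} [Fintype ι] [DecidableEq ι]
    (A : Matrix (Fin m) ι ℝ) (b : Fin m → ℝ) (u v : ι → ℤ) : Prop :=
  Feas d A b u ∧ Feas d A b v ∧ hammingDist u v = 1

/-- The solution graph of `(A, b)` is connected. -/
def SolConnected (d : ℕ) {m : ℕ} {ι : Type} [Fintype ι] [DecidableEq ι]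
    (A : Matrix (Fin m) ι ℝ) (b : Fin m → ℝ) : Prop :=
  ∀ x y, Feas d A b x → Feas d A b y → Relation.ReflTransGen (SolStep d A b) x y

/-!
Fix a row `i`. If some eliminated column `k` has an entry `a_ik` of the sign its rule looks at
(positive for the positive rule, negative for the negative one), then when `k` was eliminated
row `i` vanished outside the columns eliminated so far, in particular on all of `Δ`; so row `i`
of `A^r` is zero and the nonempty `R(A^r, b^r)` forces `b^r_i ≤ 0`. Otherwise every `a_ik`,
`k ∈ E`, has the opposite sign, so `a_ik ζ_k ≤ a_ik d (1 - x^e_k)` for `ζ_k ∈ [0, d]` and the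
`E`-part of row `i` of `A (z, ζ)` is at most `b^e_i`. Either way row `i` of `A (z, ζ) ≥ b`
implies row `i` of `A^r z ≥ b^r`.
-/

theorem List.Nodup.get_notMem_take {α : Type*} {l : List α} (hl : l.Nodup) (t : Fin l.length) :
    l.get t ∉ l.take t := by
  rw [List.mem_take_iff_getElem]
  rintro ⟨j, hj, hjt⟩
  have := (hl.getElem_inj_iff (hi := by omega)).mp hjt
  omega

theorem elimCols_apply_of_notMem {m n : ℕ} (A : Matrix (Fin m) (Fin n) ℝ) {J : Finset (Fin n)}
    {j : Fin n} (hj : j ∉ J) (i : Fin m) : elimCols A J i j = A i j :=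
  if_neg hj

theorem eq_zero_of_elimCols_rule {m n : ℕ} {A : Matrix (Fin m) (Fin n) ℝ} {J : Finset (Fin n)}
    {k : Fin n} {P : ℝ → Prop}
    (hrule : ∀ i, P (elimCols A J i k) → ∀ j ≠ k, elimCols A J i j = 0) (hk : k ∉ J)
    {i : Fin m} (hi : P (A i k)) {j : Fin n} (hjJ : j ∉ J) (hjk : j ≠ k) : A i j = 0 := by
  rw [← elimCols_apply_of_notMem A hk] at hi
  rw [← elimCols_apply_of_notMem A hjJ]
  exact hrule i hi j hjk

theorem row_eq_zero_off_or_sign_against_rule {m n : ℕ} {A : Matrix (Fin m) (Fin n) ℝ}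
    {l : List (Fin n)} (hnd : l.Nodup) {rule : Fin n → Bool}
    (hrule : ∀ t : Fin l.length,
      if rule (l.get t) then
        ∀ i, 0 < elimCols A (l.take t).toFinset i (l.get t) →
          ∀ j' ≠ l.get t, elimCols A (l.take t).toFinset i j' = 0
      else
        ∀ i, elimCols A (l.take t).toFinset i (l.get t) < 0 →
          ∀ j' ≠ l.get t, elimCols A (l.take t).toFinset i j' = 0)
    (i : Fin m) :
    (∀ j ∉ l.toFinset, A i j = 0) ∨ ∀ k ∈ l.toFinset, if rule k then A i k ≤ 0 else 0 ≤ A i k := by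
  refine or_iff_not_imp_right.mpr fun hsign j hj => ?_
  push Not at hsign
  obtain ⟨k, hk, hfires⟩ := hsign
  obtain ⟨t, rfl⟩ := List.get_of_mem (List.mem_toFinset.mp hk)
  have hkt : l.get t ∉ (l.take t).toFinset := by
    simpa only [List.mem_toFinset] using hnd.get_notMem_take t
  have hjt : j ∉ (l.take t).toFinset := fun h =>
    hj (List.mem_toFinset.mpr (List.mem_of_mem_take (List.mem_toFinset.mp h)))
  have hjk : j ≠ l.get t := by
    rintro rfl
    exact hj hk
  have hr := hrule t
  cases hrk : rule (l.get t) <;> simp only [hrk, if_true, Bool.false_eq_true, if_false,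
    not_le] at hr hfires
  · exact eq_zero_of_elimCols_rule (P := (· < 0)) hr hkt hfires hjt hjk
  · exact eq_zero_of_elimCols_rule (P := (0 < ·)) hr hkt hfires hjt hjk

theorem mul_le_mul_one_sub_ite {a ζ d : ℝ} {r : Bool} (ha : if r then a ≤ 0 else 0 ≤ a)
    (hζ₀ : 0 ≤ ζ) (hζd : ζ ≤ d) : a * ζ ≤ a * (d * (1 - if r then 1 else 0)) := by
  cases r <;> simp only [Bool.false_eq_true, if_true, if_false] at ha ⊢ <;> nlinarith

theorem sum_mul_dite_mem {ι : Type} [Fintype ι] [DecidableEq ι] (E : Finset ι) (a : ι → ℝ)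
    (ζ : ι → ℤ) (z : {j // j ∉ E} → ℤ) :
    ∑ j, a j * ((if hj : j ∈ E then ζ j else z ⟨j, hj⟩ : ℤ) : ℝ) =
      ∑ k ∈ E, a k * (ζ k : ℝ) + ∑ j : {j // j ∉ E}, a j * (z j : ℝ) := by
  rw [← Finset.sum_add_sum_compl E,
    Finset.sum_subtype (p := (· ∉ E)) Eᶜ (fun _ => Finset.mem_compl)]
  congr 1
  · exact Finset.sum_congr rfl fun k hk => by rw [dif_pos hk]
  · exact Finset.sum_congr rfl fun j _ => by rw [dif_neg j.2]

theorem stmt14_general (d : ℕ) (m n : ℕ) (A : Matrix (Fin m) (Fin n) ℝ)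
    (E : Finset (Fin n)) (l : List (Fin n)) (hnd : l.Nodup) (hlE : l.toFinset = E)
    (rule : Fin n → Bool)
    (hrule : ∀ t : Fin l.length,
      if rule (l.get t) then
        ∀ i, 0 < elimCols A (l.take t).toFinset i (l.get t) →
          ∀ j' ≠ l.get t, elimCols A (l.take t).toFinset i j' = 0
      else
        ∀ i, elimCols A (l.take t).toFinset i (l.get t) < 0 →
          ∀ j' ≠ l.get t, elimCols A (l.take t).toFinset i j' = 0)
    (xe : Fin n → ℤ) (hxe : ∀ k ∈ E, xe k = if rule k then 1 else 0)
    (br : Fin m → ℝ)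
    (hne : ∃ z0 : {j : Fin n // j ∉ E} → ℤ, InD d z0 ∧
      ∀ i, br i ≤ ∑ j : {j : Fin n // j ∉ E}, A i j.1 * (z0 j : ℝ))
    (b : Fin m → ℝ)
    (hb : ∀ i, b i = br i + ∑ k ∈ E, A i k * ((d : ℝ) * (1 - (xe k : ℝ))))
    (z : {j : Fin n // j ∉ E} → ℤ)
    (hzinf : ¬ ∀ i, br i ≤ ∑ j : {j : Fin n // j ∉ E}, A i j.1 * (z j : ℝ))
    (zeta : Fin n → ℤ) (hzetaD : InD d zeta) :
    ¬ Feas d A b (fun j => if hj : j ∈ E then zeta j else z ⟨j, hj⟩) := by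
  subst hlE
  rintro ⟨-, hfeas⟩
  refine hzinf fun i => ?_
  have hrow := hfeas i
  rw [sum_mul_dite_mem, hb] at hrow
  rcases row_eq_zero_off_or_sign_against_rule hnd hrule i with hzero | hsign
  · obtain ⟨z0, -, hz0⟩ := hne
    have hoff (w : {j // j ∉ l.toFinset} → ℤ) : ∑ j, A i j.1 * (w j : ℝ) = 0 :=
      Finset.sum_eq_zero fun j _ => by rw [hzero j.1 j.2, zero_mul]
    simpa only [hoff] using hz0 i
  · have hE : ∑ k ∈ l.toFinset, A i k * (zeta k : ℝ) ≤
        ∑ k ∈ l.toFinset, A i k * ((d : ℝ) * (1 - (xe k : ℝ))) :=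
      Finset.sum_le_sum fun k hk => by
        rw [hxe k hk, Int.cast_ite, Int.cast_one, Int.cast_zero]
        exact mul_le_mul_one_sub_ite (hsign k hk) (mod_cast (hzetaD k).1) (mod_cast (hzetaD k).2)
    linarith

theorem stmt14 (d : ℕ) (hd : 0 < d) (m n : ℕ) (A : Matrix (Fin m) (Fin n) ℝ)
    (E : Finset (Fin n)) (l : List (Fin n)) (hnd : l.Nodup) (hlE : l.toFinset = E)
    (hmax : ∀ j ∉ E, ¬ CanElim (elimCols A E) j)
    (rule : Fin n → Bool)
    (hrule : ∀ t : Fin l.length,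
      if rule (l.get t) then
        ∀ i, 0 < elimCols A (l.take t).toFinset i (l.get t) →
          ∀ j' ≠ l.get t, elimCols A (l.take t).toFinset i j' = 0
      else
        ∀ i, elimCols A (l.take t).toFinset i (l.get t) < 0 →
          ∀ j' ≠ l.get t, elimCols A (l.take t).toFinset i j' = 0)
    (xe : Fin n → ℤ) (hxe : ∀ k ∈ E, xe k = if rule k then 1 else 0)
    (br : Fin m → ℝ)
    (hne : ∃ z0 : {j : Fin n // j ∉ E} → ℤ, InD d z0 ∧
      ∀ i, br i ≤ ∑ j : {j : Fin n // j ∉ E}, A i j.1 * (z0 j : ℝ))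
    (b : Fin m → ℝ)
    (hb : ∀ i, b i = br i + ∑ k ∈ E, A i k * ((d : ℝ) * (1 - (xe k : ℝ))))
    (z : {j : Fin n // j ∉ E} → ℤ) (hzD : InD d z)
    (hzinf : ¬ ∀ i, br i ≤ ∑ j : {j : Fin n // j ∉ E}, A i j.1 * (z j : ℝ))
    (zeta : Fin n → ℤ) (hzetaD : InD d zeta) :
    ¬ Feas d A b (fun j => if hj : j ∈ E then zeta j else z ⟨j, hj⟩) :=
  stmt14_general d m n A E l hnd hlE rule hrule xe hxe br hne b hb z hzinf zeta hzetaD
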